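/- Ahlfors' Lemma: If λ(z)|dz| is a regular conformal pseudo-metric on the unit disk 𝔻 with Gauss curvature bounded above by -1 at every point where λ > 0, then λ(z) ≤ 2/(1-|z|²) for every z ∈ 𝔻. -/

import Mathlib

set_option maxHeartbeats 1000000

open Filter Topology Set


/-- The Laplacian of `u : ℂ → ℝ` at `z`: sum of second derivatives in the
real and imaginary coordinate directions. -/
noncomputable def lap (u : ℂ → ℝ) (z : ℂ) : ℝ :=
  iteratedDeriv 2 (fun t : ℝ => u (z + (t : ℂ))) 0 +
    iteratedDeriv 2 (fun t : ℝ => u (z + (t : ℂ) * Complex.I)) 0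


/-- From `ContDiffAt ℝ 2` at `0`, get eventual differentiability of `f` and
differentiability of `deriv f` at `0`. -/
lemma contDiffAt_two_aux {f : ℝ → ℝ} (hf : ContDiffAt ℝ 2 f 0) :
    DifferentiableAt ℝ (deriv f) 0 ∧ ∀ᶠ t in 𝓝 (0:ℝ), DifferentiableAt ℝ f t := by
  obtain ⟨u, hu, hcd⟩ := hf.contDiffOn le_rfl (by simp)
  obtain ⟨v, hvu, hv, h0v⟩ := mem_nhds_iff.mp hu
  have hcdv : ContDiffOn ℝ 2 f v := hcd.mono hvu
  have h2 : (2 : WithTop ℕ∞) = 1 + 1 := by norm_num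
  rw [h2, contDiffOn_succ_iff_deriv_of_isOpen hv] at hcdv
  constructor
  · exact ((hcdv.2.2.differentiableOn one_ne_zero) 0 h0v).differentiableAt (hv.mem_nhds h0v)
  · filter_upwards [hv.mem_nhds h0v] with t ht
    exact (hcdv.1 t ht).differentiableAt (hv.mem_nhds ht)

/-- Second derivative of a sum. -/
lemma deriv2_add {f g : ℝ → ℝ} (hf : ContDiffAt ℝ 2 f 0) (hg : ContDiffAt ℝ 2 g 0) :
    deriv (deriv (fun t => f t + g t)) 0 = deriv (deriv f) 0 + deriv (deriv g) 0 := by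
  obtain ⟨hf', hfe⟩ := contDiffAt_two_aux hf
  obtain ⟨hg', hge⟩ := contDiffAt_two_aux hg
  have h1 : deriv (fun t => f t + g t) =ᶠ[𝓝 (0:ℝ)] fun t => deriv f t + deriv g t := by
    filter_upwards [hfe, hge] with t htf htg
    exact deriv_add htf htg
  rw [h1.deriv_eq]
  exact deriv_add hf' hg'

/-- Second derivative test (necessary condition): at an interior local max of a
`C²` function, the second derivative is nonpositive. -/
lemma second_deriv_test {g : ℝ → ℝ} (hg : ContDiffAt ℝ 2 g 0) (hmax : IsLocalMax g 0) :
    deriv (deriv g) 0 ≤ 0 := by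
  by_contra hpos
  push_neg at hpos
  obtain ⟨hd', hde⟩ := contDiffAt_two_aux hg
  have hd0 : deriv g 0 = 0 := hmax.deriv_eq_zero
  have hslope : Tendsto (slope (deriv g) 0) (𝓝[≠] 0) (𝓝 (deriv (deriv g) 0)) :=
    hasDerivAt_iff_tendsto_slope.mp hd'.hasDerivAt
  have hev : ∀ᶠ t in 𝓝[>] (0:ℝ), 0 < deriv g t := by
    have h1 : ∀ᶠ t in 𝓝[≠] (0:ℝ), 0 < slope (deriv g) 0 t :=
      hslope.eventually (eventually_gt_nhds hpos)
    have h2 : ∀ᶠ t in 𝓝[>] (0:ℝ), 0 < slope (deriv g) 0 t :=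
      h1.filter_mono (nhdsWithin_mono _ fun x hx => ne_of_gt hx)
    filter_upwards [h2, self_mem_nhdsWithin] with t ht ht0
    have : slope (deriv g) 0 t = deriv g t / t := by
      simp [slope_def_field, hd0, div_eq_inv_mul]
    rw [this] at ht
    by_contra hc
    push_neg at hc
    exact absurd ht (not_lt.mpr (div_nonpos_of_nonpos_of_nonneg hc ht0.le))
  obtain ⟨a, ha, hIoo⟩ := (nhdsGT_basis_of_exists_gt ⟨1, one_pos⟩).eventually_iff.mp hev
  obtain ⟨ε, hε, hball⟩ := Metric.eventually_nhds_iff.mp (hmax.and hde)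
  set b := min a ε / 2 with hb
  have hb0 : 0 < b := by positivity
  have hba : b < a := by
    calc b ≤ a / 2 := by
          apply div_le_div_of_nonneg_right ?_ (by norm_num)
          · exact min_le_left _ _
      _ < a := by linarith
  have hbε : b < ε := by
    calc b ≤ ε / 2 := by
          apply div_le_div_of_nonneg_right (min_le_right _ _) (by norm_num)
      _ < ε := by linarith
  have hmono : StrictMonoOn g (Set.Icc 0 b) := by
    apply strictMonoOn_of_deriv_pos (convex_Icc 0 b)
    · intro t ht
      have : dist t 0 < ε := by
        rw [Real.dist_eq, sub_zero, abs_of_nonneg ht.1]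
        exact lt_of_le_of_lt ht.2 hbε
      exact ((hball this).2).continuousAt.continuousWithinAt
    · intro t ht
      rw [interior_Icc] at ht
      exact hIoo ⟨ht.1, ht.2.trans hba⟩
  have h1 : g 0 < g b := hmono (Set.left_mem_Icc.mpr hb0.le)
    (Set.right_mem_Icc.mpr hb0.le) hb0
  have h2 : g b ≤ g 0 := (hball (by rw [Real.dist_eq, sub_zero, abs_of_pos hb0]; exact hbε)).1
  linarith

lemma quad_hasDerivAt (c a : ℝ) (t : ℝ) :
    HasDerivAt (fun t : ℝ => c - (a + t) ^ 2) (-(2 * (a + t))) t := by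
  simpa using (((hasDerivAt_id t).const_add a).pow 2).const_sub c

lemma quad_contDiffAt (c a : ℝ) (h : a ^ 2 < c) :
    ContDiffAt ℝ 2 (fun t : ℝ => Real.log (c - (a + t) ^ 2)) 0 := by
  have h0 : c - (a + 0) ^ 2 ≠ 0 := by simpa using (sub_pos.mpr h).ne'
  exact (Real.contDiffAt_log.mpr h0).comp 0
    ((contDiffAt_const.sub ((contDiffAt_const.add contDiffAt_id).pow 2)))

lemma quad_eventually_pos (c a : ℝ) (h : a ^ 2 < c) :
    ∀ᶠ t in nhds (0:ℝ), 0 < c - (a + t) ^ 2 := by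
  have hcont : ContinuousAt (fun t : ℝ => c - (a + t) ^ 2) 0 :=
    (quad_hasDerivAt c a 0).continuousAt
  have h0 : 0 < c - (a + 0) ^ 2 := by simpa using sub_pos.mpr h
  exact hcont.eventually (eventually_gt_nhds h0)

lemma quad_deriv2 (c a : ℝ) (h : a ^ 2 < c) :
    deriv (deriv (fun t : ℝ => Real.log (c - (a + t) ^ 2))) 0 =
      (-2 * (c - a ^ 2) - 4 * a ^ 2) / (c - a ^ 2) ^ 2 := by
  have hc0 : 0 < c - a ^ 2 := sub_pos.mpr h
  have h1 : deriv (fun t : ℝ => Real.log (c - (a + t) ^ 2)) =ᶠ[𝓝 (0:ℝ)]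
      fun t => -(2 * (a + t)) / (c - (a + t) ^ 2) := by
    filter_upwards [quad_eventually_pos c a h] with t ht
    exact ((quad_hasDerivAt c a t).log (ne_of_gt ht)).deriv
  rw [h1.deriv_eq]
  have hnum : HasDerivAt (fun t : ℝ => -(2 * (a + t))) (-2) 0 := by
    simpa [Pi.neg_def] using (((hasDerivAt_id (0:ℝ)).const_add a).const_mul 2).neg
  have hden := quad_hasDerivAt c a 0
  have h0 : c - (a + 0) ^ 2 ≠ 0 := by simpa using hc0.ne'
  have := (hnum.fun_div hden h0).deriv
  rw [this]
  rw [show a + (0:ℝ) = a by ring]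
  ring

lemma iteratedDeriv_two (f : ℝ → ℝ) (x : ℝ) :
    iteratedDeriv 2 f x = deriv (deriv f) x := by
  rw [show (2:ℕ) = 1+1 from rfl, iteratedDeriv_succ, iteratedDeriv_one]

lemma dir_lemma {f q : ℝ → ℝ} (hf : ContDiffAt ℝ 2 f 0) (hq : ContDiffAt ℝ 2 q 0)
    (hmax : IsLocalMax (fun t => f t + q t) 0) :
    deriv (deriv f) 0 + deriv (deriv q) 0 ≤ 0 := by
  rw [← deriv2_add hf hq]
  exact second_deriv_test (hf.add hq) hmax

lemma norm_sq_complex (w : ℂ) : ‖w‖ ^ 2 = w.re ^ 2 + w.im ^ 2 := by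
  rw [Complex.sq_norm, Complex.normSq_apply]; ring

lemma ahlfors_key (lam : ℂ → ℝ)
    (hcont : ContinuousOn lam (Metric.ball (0 : ℂ) 1))
    (hnonneg : ∀ z ∈ Metric.ball (0 : ℂ) 1, 0 ≤ lam z)
    (hC2 : ContDiffOn ℝ 2 lam {z ∈ Metric.ball (0 : ℂ) 1 | 0 < lam z})
    (hcurv : ∀ z ∈ Metric.ball (0 : ℂ) 1, 0 < lam z →
      (lam z) ^ 2 ≤ lap (fun w => Real.log (lam w)) z)
    {r : ℝ} (hr0 : 0 < r) (hr1 : r < 1) :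
    ∀ w : ℂ, ‖w‖ < r → lam w * (r ^ 2 - ‖w‖ ^ 2) ≤ 2 * r := by
  by_contra hcon
  push_neg at hcon
  obtain ⟨w0, hw0r, hw0⟩ := hcon
  set K := Metric.closedBall (0 : ℂ) r with hK
  have hKsub : K ⊆ Metric.ball (0 : ℂ) 1 := Metric.closedBall_subset_ball hr1
  set F := fun w : ℂ => lam w * (r ^ 2 - ‖w‖ ^ 2) with hF
  have hFcont : ContinuousOn F K :=
    (hcont.mono hKsub).mul
      ((continuous_const.sub ((continuous_norm).pow 2)).continuousOn)
  obtain ⟨z0, hz0K, hz0max⟩ := (isCompact_closedBall (0:ℂ) r).exists_isMaxOn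
    ⟨0, by simp [hK, hr0.le]⟩ hFcont
  have hw0K : w0 ∈ K := Metric.mem_closedBall.mpr (by simpa using hw0r.le)
  have hFz0 : 2 * r < F z0 := lt_of_lt_of_le hw0 (hz0max hw0K)
  have hz0ball : z0 ∈ Metric.ball (0:ℂ) 1 := hKsub hz0K
  have hlamnn : 0 ≤ lam z0 := hnonneg z0 hz0ball
  have hz0Kn : ‖z0‖ ≤ r := by simpa [hK] using hz0K
  have hBnn : 0 ≤ r ^ 2 - ‖z0‖ ^ 2 := by nlinarith [norm_nonneg z0]
  have hFpos : 0 < lam z0 * (r ^ 2 - ‖z0‖ ^ 2) := lt_trans (by positivity) hFz0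
  have hlam0 : 0 < lam z0 := by nlinarith
  have hBpos : 0 < r ^ 2 - ‖z0‖ ^ 2 := by nlinarith
  have hz0r : ‖z0‖ < r := by nlinarith [norm_nonneg z0]
  -- the set where lam is positive is open
  set S := {z ∈ Metric.ball (0:ℂ) 1 | 0 < lam z} with hSdef
  have hSopen : IsOpen S := by
    have : S = Metric.ball (0:ℂ) 1 ∩ lam ⁻¹' Set.Ioi 0 := rfl
    rw [this]
    exact hcont.isOpen_inter_preimage Metric.isOpen_ball isOpen_Ioi
  have hz0S : z0 ∈ S := ⟨hz0ball, hlam0⟩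
  -- local max of u at z0
  set u := fun w : ℂ => Real.log (lam w) + Real.log (r ^ 2 - ‖w‖ ^ 2) with hu
  have hUmax : ∀ᶠ w in 𝓝 z0, u w ≤ u z0 := by
    filter_upwards [hSopen.mem_nhds hz0S,
      Metric.isOpen_ball.mem_nhds (Metric.mem_ball.mpr (by rw [dist_zero_right]; exact hz0r))] with w hwS hwr
    have hlamw : 0 < lam w := hwS.2
    have hwrn : ‖w‖ < r := by rw [Metric.mem_ball, dist_zero_right] at hwr; exact hwr
    have hBw : 0 < r ^ 2 - ‖w‖ ^ 2 := by nlinarith [norm_nonneg w]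
    have hwK : w ∈ K := Metric.mem_closedBall.mpr (by simpa using hwrn.le)
    have hle : F w ≤ F z0 := hz0max hwK
    have h1 : u w = Real.log (F w) := (Real.log_mul hlamw.ne' hBw.ne').symm
    have h2 : u z0 = Real.log (F z0) := (Real.log_mul hlam0.ne' hBpos.ne').symm
    rw [h1, h2]
    exact Real.log_le_log (by positivity) hle
  -- log ∘ lam is C² at z0
  have hll : ContDiffAt ℝ 2 (fun w => Real.log (lam w)) z0 :=
    (Real.contDiffAt_log.mpr hlam0.ne').comp z0 (hC2.contDiffAt (hSopen.mem_nhds hz0S))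
  set x := z0.re with hx
  set y := z0.im with hy
  have hxy : x ^ 2 + y ^ 2 = ‖z0‖ ^ 2 := (norm_sq_complex z0).symm
  -- direction 1
  have haff1 : ContDiffAt ℝ 2 (fun t : ℝ => z0 + (t : ℂ)) 0 :=
    (contDiff_const.add Complex.ofRealCLM.contDiff).contDiffAt
  have haff1v : (fun t : ℝ => z0 + (t : ℂ)) 0 = z0 := by simp
  have hf1 : ContDiffAt ℝ 2 (fun t : ℝ => Real.log (lam (z0 + (t:ℂ)))) 0 := by
    have h : ContDiffAt ℝ 2 ((fun w => Real.log (lam w)) ∘ (fun t : ℝ => z0 + (t:ℂ))) 0 :=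
      ContDiffAt.comp 0 (by simpa using hll) haff1
    exact h
  have hq1eq : ∀ t : ℝ, r ^ 2 - ‖z0 + (t:ℂ)‖ ^ 2 = (r ^ 2 - y ^ 2) - (x + t) ^ 2 := by
    intro t
    rw [norm_sq_complex]
    simp [Complex.add_re, Complex.add_im]
    ring
  have ha1 : x ^ 2 < r ^ 2 - y ^ 2 := by nlinarith
  have hq1 : ContDiffAt ℝ 2 (fun t : ℝ => Real.log ((r ^ 2 - y ^ 2) - (x + t) ^ 2)) 0 :=
    quad_contDiffAt _ _ ha1
  have hmax1 : IsLocalMax (fun t : ℝ => Real.log (lam (z0 + (t:ℂ))) +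
      Real.log ((r ^ 2 - y ^ 2) - (x + t) ^ 2)) 0 := by
    have hc : ContinuousAt (fun t : ℝ => z0 + (t : ℂ)) 0 := haff1.continuousAt
    have ht : Filter.Tendsto (fun t : ℝ => z0 + (t : ℂ)) (𝓝 0) (𝓝 z0) := by
      simpa [haff1v] using hc.tendsto
    have hfun1 : (fun t : ℝ => Real.log (lam (z0 + (t:ℂ))) +
        Real.log ((r ^ 2 - y ^ 2) - (x + t) ^ 2)) = fun t : ℝ => u (z0 + (t:ℂ)) := by
      funext t
      simp only [hu]
      rw [hq1eq t]
    rw [hfun1]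
    unfold IsLocalMax IsMaxFilter
    simp only [Complex.ofReal_zero, add_zero]
    exact ht.eventually hUmax
  have hd1 := dir_lemma hf1 hq1 hmax1
  rw [quad_deriv2 _ _ ha1] at hd1
  -- direction 2
  have haff2 : ContDiffAt ℝ 2 (fun t : ℝ => z0 + (t : ℂ) * Complex.I) 0 :=
    (contDiff_const.add (Complex.ofRealCLM.contDiff.mul contDiff_const)).contDiffAt
  have haff2v : (fun t : ℝ => z0 + (t : ℂ) * Complex.I) 0 = z0 := by simp
  have hf2 : ContDiffAt ℝ 2 (fun t : ℝ => Real.log (lam (z0 + (t:ℂ) * Complex.I))) 0 := by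
    have h : ContDiffAt ℝ 2 ((fun w => Real.log (lam w)) ∘ (fun t : ℝ => z0 + (t:ℂ) * Complex.I)) 0 :=
      ContDiffAt.comp 0 (by simpa using hll) haff2
    exact h
  have hq2eq : ∀ t : ℝ, r ^ 2 - ‖z0 + (t:ℂ) * Complex.I‖ ^ 2 = (r ^ 2 - x ^ 2) - (y + t) ^ 2 := by
    intro t
    rw [norm_sq_complex]
    simp [Complex.add_re, Complex.add_im, Complex.mul_re, Complex.mul_im]
    ring
  have ha2 : y ^ 2 < r ^ 2 - x ^ 2 := by nlinarith
  have hq2 : ContDiffAt ℝ 2 (fun t : ℝ => Real.log ((r ^ 2 - x ^ 2) - (y + t) ^ 2)) 0 :=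
    quad_contDiffAt _ _ ha2
  have hmax2 : IsLocalMax (fun t : ℝ => Real.log (lam (z0 + (t:ℂ) * Complex.I)) +
      Real.log ((r ^ 2 - x ^ 2) - (y + t) ^ 2)) 0 := by
    have hc : ContinuousAt (fun t : ℝ => z0 + (t : ℂ) * Complex.I) 0 := haff2.continuousAt
    have ht : Filter.Tendsto (fun t : ℝ => z0 + (t : ℂ) * Complex.I) (𝓝 0) (𝓝 z0) := by
      simpa [haff2v] using hc.tendsto
    have hfun2 : (fun t : ℝ => Real.log (lam (z0 + (t:ℂ) * Complex.I)) +
        Real.log ((r ^ 2 - x ^ 2) - (y + t) ^ 2)) = fun t : ℝ => u (z0 + (t:ℂ) * Complex.I) := by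
      funext t
      simp only [hu]
      rw [hq2eq t]
    rw [hfun2]
    unfold IsLocalMax IsMaxFilter
    simp only [Complex.ofReal_zero, zero_mul, add_zero]
    exact ht.eventually hUmax
  have hd2 := dir_lemma hf2 hq2 hmax2
  rw [quad_deriv2 _ _ ha2] at hd2
  -- curvature bound
  have hcurv0 := hcurv z0 hz0ball hlam0
  rw [lap, iteratedDeriv_two, iteratedDeriv_two] at hcurv0
  set s := r ^ 2 - ‖z0‖ ^ 2 with hs
  have hc1 : r ^ 2 - y ^ 2 - x ^ 2 = s := by rw [hs, ← hxy]; ring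
  have hc2 : r ^ 2 - x ^ 2 - y ^ 2 = s := by rw [hs, ← hxy]; ring
  rw [hc1] at hd1
  rw [hc2] at hd2
  -- numeric contradiction
  have hsum : lam z0 ^ 2 ≤ (2 * s + 4 * x ^ 2) / s ^ 2 + (2 * s + 4 * y ^ 2) / s ^ 2 := by
    calc lam z0 ^ 2 ≤ _ := hcurv0
    _ ≤ (2 * s + 4 * x ^ 2) / s ^ 2 + (2 * s + 4 * y ^ 2) / s ^ 2 := by
        have e1 : -((-2 * s - 4 * x ^ 2) / s ^ 2) = (2 * s + 4 * x ^ 2) / s ^ 2 := by ring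
        have e2 : -((-2 * s - 4 * y ^ 2) / s ^ 2) = (2 * s + 4 * y ^ 2) / s ^ 2 := by ring
        linarith [hd1, hd2]
  have hsum2 : lam z0 ^ 2 ≤ 4 * r ^ 2 / s ^ 2 := by
    have : (2 * s + 4 * x ^ 2) / s ^ 2 + (2 * s + 4 * y ^ 2) / s ^ 2
        = (4 * s + 4 * (x ^ 2 + y ^ 2)) / s ^ 2 := by ring
    rw [this, hxy] at hsum
    have : 4 * s + 4 * ‖z0‖ ^ 2 = 4 * r ^ 2 := by rw [hs]; ring
    rwa [this] at hsum
  -- but lam z0 * s > 2r gives lam z0² * s² > 4 r²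
  have hFz0' : 2 * r < lam z0 * s := by rw [hs]; exact hFz0
  have : lam z0 ^ 2 * s ^ 2 ≤ 4 * r ^ 2 := (le_div_iff₀ (by positivity)).mp hsum2
  nlinarith [hFz0', hr0, hBpos]


/-- Ahlfors' Lemma: a regular conformal pseudo-metric on the unit disk with
curvature `≤ -1` (i.e. `Δ(log λ) ≥ λ²` where `λ > 0`) satisfies
`λ(z) ≤ 2/(1-|z|²)`. -/
theorem ahlfors_lemma (lam : ℂ → ℝ)
    (hcont : ContinuousOn lam (Metric.ball (0 : ℂ) 1))
    (hnonneg : ∀ z ∈ Metric.ball (0 : ℂ) 1, 0 ≤ lam z)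
    (hne : ¬∀ z ∈ Metric.ball (0 : ℂ) 1, lam z = 0)
    (hC2 : ContDiffOn ℝ 2 lam {z ∈ Metric.ball (0 : ℂ) 1 | 0 < lam z})
    (hcurv : ∀ z ∈ Metric.ball (0 : ℂ) 1, 0 < lam z →
      (lam z) ^ 2 ≤ lap (fun w => Real.log (lam w)) z) :
    ∀ z ∈ Metric.ball (0 : ℂ) 1, lam z ≤ 2 / (1 - ‖z‖ ^ 2) := by
  intro z hz
  have hz1 : ‖z‖ < 1 := by rw [Metric.mem_ball, dist_zero_right] at hz; exact hz
  have hden : 0 < 1 - ‖z‖ ^ 2 := by nlinarith [norm_nonneg z]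
  have hclaim : ∀ r ∈ Set.Ioo ‖z‖ 1, lam z ≤ 2 * r / (r ^ 2 - ‖z‖ ^ 2) := by
    intro r hr
    have hr0 : 0 < r := lt_of_le_of_lt (norm_nonneg z) hr.1
    have hkey := ahlfors_key lam hcont hnonneg hC2 hcurv hr0 hr.2 z hr.1
    have hpos : 0 < r ^ 2 - ‖z‖ ^ 2 := by nlinarith [norm_nonneg z, hr.1]
    rw [le_div_iff₀ hpos]
    exact hkey
  have htend : Filter.Tendsto (fun r : ℝ => 2 * r / (r ^ 2 - ‖z‖ ^ 2)) (𝓝[<] 1)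
      (𝓝 (2 / (1 - ‖z‖ ^ 2))) := by
    have hca : ContinuousAt (fun r : ℝ => 2 * r / (r ^ 2 - ‖z‖ ^ 2)) 1 := by
      apply ContinuousAt.div
      · fun_prop
      · fun_prop
      · simpa using hden.ne'
    have h2 := hca.continuousWithinAt (s := Set.Iio 1)
    simpa [ContinuousWithinAt, one_pow, mul_one] using h2
  exact ge_of_tendsto htend (by
    filter_upwards [Ioo_mem_nhdsLT_of_mem ⟨hz1, le_rfl⟩] with r hr
    exact hclaim r hr)
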